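/- arXiv:2403.03560 — 6 statements merged into one kernel-verified Lean document; each statement's English description precedes it below -/
import Mathlib

section
/- Let C ⊆ R^m be a pointed closed convex cone, p ∈ R^m and q ∈ C \ {0}. Then sup { λ ∈ R : p − λq ∈ C } = inf { ⟨p, v⟩ : v ∈ C*, ⟨q, v⟩ = 1 }. -/
/-!
Weak duality is immediate: if `p - λ • q ∈ C` and `v ∈ C*` with `⟪q, v⟫ = 1`, then
`0 ≤ ⟪p - λ • q, v⟫ = ⟪p, v⟫ - λ`. Conversely, if `p - μ • q ∉ C`, Farkas' lemma gives `y ∈ C*`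
with `⟪p, y⟫ < μ ⟪q, y⟫`. Since `C` is pointed, `-q ∉ C`, and Farkas' lemma also gives a feasible
dual point `v₀`; then `v₀ + t • y` renormalised is feasible with value `< μ` for large `t`.
So `{λ | p - λ • q ∈ C}` is exactly the set of lower bounds of the dual values, and in `ℝ` the
supremum of the lower bounds of a set is its infimum, also in the degenerate cases, where both
sides take the junk value `0`.
-/

open Set
open scoped RealInnerProductSpace

theorem Convex.add_mem_of_smul_mem {𝕜 E : Type*} [Field 𝕜] [LinearOrder 𝕜]
    [IsStrictOrderedRing 𝕜] [AddCommGroup E] [Module 𝕜 E] {C : Set E} (hconv : Convex 𝕜 C)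
    (hcone : ∀ c : 𝕜, 0 ≤ c → ∀ x ∈ C, c • x ∈ C) {x y : E} (hx : x ∈ C) (hy : y ∈ C) :
    x + y ∈ C := by
  have hmid : (1 / 2 : 𝕜) • x + (1 / 2 : 𝕜) • y ∈ C :=
    hconv hx hy (by norm_num) (by norm_num) (by norm_num)
  simpa [smul_add, smul_smul] using hcone 2 zero_le_two _ hmid

namespace ProperCone

def ofConvex {E : Type*} [AddCommGroup E] [TopologicalSpace E] [Module ℝ E] (C : Set E)
    (hconv : Convex ℝ C) (hclosed : IsClosed C) (hcone : ∀ c : ℝ, 0 ≤ c → ∀ x ∈ C, c • x ∈ C)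
    (hzero : (0 : E) ∈ C) : ProperCone ℝ E where
  carrier := C
  add_mem' hx hy := hconv.add_mem_of_smul_mem hcone hx hy
  zero_mem' := hzero
  smul_mem' c _ hx := hcone c c.2 _ hx
  isClosed' := hclosed

variable {E : Type*} [NormedAddCommGroup E] [InnerProductSpace ℝ E] [CompleteSpace E]

theorem exists_inner_eq_one_of_inner_pos {s : Set E} {q w : E} (hw : w ∈ innerDual s)
    (hqw : 0 < ⟪q, w⟫) : ∃ v ∈ innerDual s, ⟪q, v⟫ = 1 ∧ ∀ p, ⟪p, v⟫ = ⟪p, w⟫ / ⟪q, w⟫ := by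
  refine ⟨⟪q, w⟫⁻¹ • w, (innerDual s).smul_mem hw (inv_nonneg.2 hqw.le), ?_, fun p => ?_⟩
  · rw [real_inner_smul_right, inv_mul_cancel₀ hqw.ne']
  · rw [real_inner_smul_right, inv_mul_eq_div]

theorem exists_mem_innerDual_inner_eq_one (K : ProperCone ℝ E) {q : E} (hq : -q ∉ K) :
    ∃ v ∈ innerDual K, ⟪q, v⟫ = 1 := by
  obtain ⟨y, hyK, hqy⟩ := K.hyperplane_separation' hq
  rw [inner_neg_left, neg_lt_zero] at hqy
  obtain ⟨v, hv, hqv, -⟩ := exists_inner_eq_one_of_inner_pos (mem_innerDual.2 hyK) hqy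
  exact ⟨v, hv, hqv⟩

theorem exists_inner_lt_of_sub_smul_notMem {K : ProperCone ℝ E} {p q v₀ : E} {μ : ℝ}
    (hq : q ∈ K) (hv₀ : v₀ ∈ innerDual K) (hqv₀ : ⟪q, v₀⟫ = 1) (hμ : p - μ • q ∉ K) :
    ∃ v ∈ innerDual K, ⟪q, v⟫ = 1 ∧ ⟪p, v⟫ < μ := by
  obtain ⟨y, hyK, hy⟩ := K.hyperplane_separation' hμ
  have hy : ⟪p, y⟫ < μ * ⟪q, y⟫ := by
    rw [inner_sub_left, real_inner_smul_left] at hy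
    linarith
  have hqy : 0 ≤ ⟪q, y⟫ := hyK q hq
  obtain ⟨t, ht, hgap⟩ := exists_pos_lt_mul (sub_pos.2 hy) (⟪p, v₀⟫ - μ)
  set w := v₀ + t • y
  have hw : w ∈ innerDual K := add_mem hv₀ ((innerDual _).smul_mem (mem_innerDual.2 hyK) ht.le)
  have hqw : ⟪q, w⟫ = 1 + t * ⟪q, y⟫ := by
    rw [inner_add_right, real_inner_smul_right, hqv₀]
  have hqw_pos : 0 < ⟪q, w⟫ := by rw [hqw]; positivity
  obtain ⟨v, hv, hqv, hpv⟩ := exists_inner_eq_one_of_inner_pos hw hqw_pos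
  refine ⟨v, hv, hqv, ?_⟩
  rw [hpv p, div_lt_iff₀ hqw_pos, hqw, inner_add_right, real_inner_smul_right]
  linarith

theorem sub_smul_mem_iff {K : ProperCone ℝ E} {p q : E} (hq : q ∈ K) (hq' : -q ∉ K) {μ : ℝ} :
    p - μ • q ∈ K ↔ ∀ v ∈ innerDual K, ⟪q, v⟫ = 1 → μ ≤ ⟪p, v⟫ := by
  constructor
  · intro hμ v hv hqv
    have hdual := mem_innerDual.1 hv hμ
    rw [inner_sub_left, real_inner_smul_left, hqv] at hdual
    linarith
  · intro hle
    by_contra hμ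
    obtain ⟨v₀, hv₀, hqv₀⟩ := K.exists_mem_innerDual_inner_eq_one hq'
    obtain ⟨v, hv, hqv, hpv⟩ := exists_inner_lt_of_sub_smul_notMem hq hv₀ hqv₀ hμ
    exact (hle v hv hqv).not_gt hpv

end ProperCone

theorem Real.sSup_lowerBounds_eq_sInf (s : Set ℝ) : sSup (lowerBounds s) = sInf s := by
  rcases s.eq_empty_or_nonempty with rfl | hne
  · simp
  by_cases hbdd : BddBelow s
  · exact csSup_lowerBounds_eq_csInf hbdd hne
  · rw [not_nonempty_iff_eq_empty.1 hbdd, Real.sSup_empty,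
      Real.sInf_of_not_bddBelow hbdd]

/-- Conic duality: for a pointed closed convex cone `C`, `p ∈ ℝᵐ` and `q ∈ C \ {0}`,
`sup {λ : p − λq ∈ C} = inf {⟨p,v⟩ : v ∈ C*, ⟨q,v⟩ = 1}`. -/
theorem conic_duality (m : ℕ) (C : Set (EuclideanSpace ℝ (Fin m)))
    (hconv : Convex ℝ C) (hclosed : IsClosed C)
    (hcone : ∀ c : ℝ, 0 ≤ c → ∀ x ∈ C, c • x ∈ C)
    (hpointed : C ∩ (-C) = {0})
    (p q : EuclideanSpace ℝ (Fin m)) (hq : q ∈ C) (hq0 : q ≠ 0) :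
    sSup {lam : ℝ | p - lam • q ∈ C}
      = sInf {r : ℝ | ∃ v ∈ (ProperCone.innerDual C : Set (EuclideanSpace ℝ (Fin m))),
          (inner ℝ q v : ℝ) = 1 ∧ r = (inner ℝ p v : ℝ)} := by
  let K := ProperCone.ofConvex C hconv hclosed hcone (by simpa using hcone 0 le_rfl q hq)
  have hnq : -q ∉ C := fun hneg => hq0 <| by
    have hmem : q ∈ C ∩ -C := ⟨hq, by simpa using hneg⟩
    rwa [hpointed, mem_singleton_iff] at hmem
  rw [← Real.sSup_lowerBounds_eq_sInf]
  congr 1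
  ext μ
  exact (ProperCone.sub_smul_mem_iff (K := K) hq hnq).trans
    ⟨fun h r ⟨v, hv, hqv, hr⟩ => hr ▸ h v hv hqv, fun h v hv hqv => h ⟨v, hv, hqv, rfl⟩⟩
end

section
/- Let A ⊆ N^n with 0 ∈ A, X ⊆ R^n nonempty, and f ∈ R[x]_A. Then sup { λ ∈ R : f − λ ∈ P_A(X) } = inf { L_v(f) : v ∈ M_A(X) }, where L_v(f) = Σ_{α∈A} f_α v_α. -/
/-- Duality between the bound-certification problem and the monomial convexification:
for `0 ∈ A`, `X` nonempty and `f ∈ ℝ[x]_A`,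
`sup {λ : f − λ ∈ P_A(X)} = inf {L_v(f) : v ∈ M_A(X)}`. -/
theorem bound_certification_duality (n : ℕ) (A : Finset (Fin n → ℕ))
    (h0A : (0 : Fin n → ℕ) ∈ A) (X : Set (Fin n → ℝ)) (hX : X.Nonempty)
    (f : ↥A → ℝ) :
    sSup {lam : ℝ | ∀ x ∈ X,
        0 ≤ ∑ α : ↥A, (f α - if α.1 = 0 then lam else 0) * ∏ i, x i ^ α.1 i}
      = sInf {r : ℝ | ∃ v ∈ convexHull ℝ
            ((fun x : Fin n → ℝ => (fun α : ↥A => ∏ i, x i ^ α.1 i)) '' X),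
          r = ∑ α : ↥A, f α * v α} := by
  classical
  set m : (Fin n → ℝ) → (↥A → ℝ) := fun x => fun α : ↥A => ∏ i, x i ^ α.1 i with hm
  set L : (↥A → ℝ) →ₗ[ℝ] ℝ :=
    { toFun := fun v => ∑ α : ↥A, f α * v α
      map_add' := by intro v w; simp [mul_add, Finset.sum_add_distrib]
      map_smul' := by
        intro c v
        simp [Finset.mul_sum, mul_comm, mul_left_comm] } with hL
  set g : (Fin n → ℝ) → ℝ := fun x => L (m x) with hg
  set z : ↥A := ⟨0, h0A⟩ with hz
  -- key pointwise identity
  have key : ∀ (x : Fin n → ℝ) (lam : ℝ),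
      ∑ α : ↥A, (f α - if α.1 = 0 then lam else 0) * ∏ i, x i ^ α.1 i
        = g x - lam := by
    intro x lam
    have h1 : ∑ α : ↥A, (f α - if α.1 = 0 then lam else 0) * ∏ i, x i ^ α.1 i
        = (∑ α : ↥A, f α * ∏ i, x i ^ α.1 i)
          - ∑ α : ↥A, (if α.1 = 0 then lam else 0) * ∏ i, x i ^ α.1 i := by
      rw [← Finset.sum_sub_distrib]
      exact Finset.sum_congr rfl fun α _ => by ring
    have h2 : ∑ α : ↥A, (if α.1 = 0 then lam else 0) * ∏ i, x i ^ α.1 i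
        = lam := by
      have : ∀ α : ↥A, (if α.1 = 0 then lam else 0) * ∏ i, x i ^ α.1 i
          = if α = z then lam * ∏ i, x i ^ α.1 i else 0 := by
        intro α
        by_cases h : α = z
        · subst h; simp [hz]
        · have h' : ¬ α.1 = 0 := fun hh => h (Subtype.ext hh)
          simp [h, h']
      rw [Finset.sum_congr rfl fun α _ => this α, Finset.sum_ite_eq' Finset.univ z]
      simp [hz]
    rw [h1, h2]; rfl
  have hkeyset : {lam : ℝ | ∀ x ∈ X,
      0 ≤ ∑ α : ↥A, (f α - if α.1 = 0 then lam else 0) * ∏ i, x i ^ α.1 i}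
      = lowerBounds (g '' X) := by
    ext lam
    simp only [Set.mem_setOf_eq, lowerBounds, Set.mem_image]
    constructor
    · rintro h y ⟨x, hx, rfl⟩
      have := h x hx; rw [key x lam] at this; linarith
    · intro h x hx
      rw [key x lam]
      have := h ⟨x, hx, rfl⟩; linarith
  have hrhs : {r : ℝ | ∃ v ∈ convexHull ℝ (m '' X), r = ∑ α : ↥A, f α * v α}
      = convexHull ℝ (g '' X) := by
    have himg : L '' (convexHull ℝ (m '' X)) = convexHull ℝ (g '' X) := by
      rw [L.image_convexHull, ← Set.image_comp]
      rfl
    rw [← himg]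
    ext r
    simp only [Set.mem_setOf_eq, Set.mem_image]
    constructor
    · rintro ⟨v, hv, rfl⟩; exact ⟨v, hv, rfl⟩
    · rintro ⟨v, hv, rfl⟩; exact ⟨v, hv, rfl⟩
  rw [hkeyset, hrhs]
  have hsub : g '' X ⊆ convexHull ℝ (g '' X) := subset_convexHull ℝ _
  have hne : (g '' X).Nonempty := hX.image g
  have hlb : lowerBounds (convexHull ℝ (g '' X)) = lowerBounds (g '' X) := by
    apply Set.Subset.antisymm
    · intro b hb y hy; exact hb (hsub hy)
    · intro b hb y hy
      have : convexHull ℝ (g '' X) ⊆ Set.Ici b := by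
        apply convexHull_min _ (convex_Ici b)
        intro t ht; exact hb ht
      exact this hy
  by_cases hbdd : BddBelow (g '' X)
  · have hglb : IsGLB (g '' X) (sInf (g '' X)) := isGLB_csInf hne hbdd
    have h1 : sInf (convexHull ℝ (g '' X)) = sInf (g '' X) := by
      have hglb' : IsGLB (convexHull ℝ (g '' X)) (sInf (g '' X)) := by
        constructor
        · rw [hlb]; exact hglb.1
        · intro b hb
          exact hglb.2 (by rw [← hlb]; exact hb)
      exact hglb'.csInf_eq (hne.mono hsub)
    rw [h1]
    exact (IsGreatest.csSup_eq ⟨hglb.1, hglb.2⟩)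
  · have h1 : lowerBounds (g '' X) = ∅ := by
      by_contra h
      exact hbdd (Set.nonempty_iff_ne_empty.2 h)
    have h2 : ¬ BddBelow (convexHull ℝ (g '' X)) := fun hb => hbdd (hb.mono hsub)
    rw [h1, Real.sSup_empty, Real.sInf_of_not_bddBelow h2]
end

section
/- Let α ∈ N^n and P ⊆ {0,α_1} × ... × {0,α_n}, a so-called multilinear pattern, and K a box in R^n. Then the moment body M_P(K) is a polytope. -/
open Finset Set

/-- Multilinear functions on a box lie in the convex hull of the vertex images. -/
lemma multilinear_mem_hull {n : ℕ} {ι : Type*} (mask : ι → Fin n → Bool)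
    (m M : Fin n → ℝ) :
    ∀ (s : Finset (Fin n)) (y : Fin n → ℝ),
      (∀ i, y i ∈ Set.Icc (m i) (M i)) → (∀ i ∉ s, y i = m i ∨ y i = M i) →
      (fun β => ∏ i, if mask β i then y i else 1) ∈
        convexHull ℝ (Set.range fun c : Fin n → Bool =>
          fun β => ∏ i, if mask β i then (if c i then M i else m i) else 1) := by
  classical
  intro s
  induction s using Finset.induction with
  | empty =>
      intro y hy hv
      apply subset_convexHull
      refine ⟨fun i => if y i = M i then true else false, ?_⟩
      have hc : ∀ i, (if (if y i = M i then true else false) = true then M i else m i) = y i := by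
        intro i
        by_cases hM : y i = M i
        · simp [hM]
        · have h2 := (hv i (by simp)).resolve_right hM
          rw [if_neg hM, if_neg (by simp), h2]
      funext β
      refine Finset.prod_congr rfl fun i _ => ?_
      rw [hc i]
  | @insert j s hj ih =>
      intro y hy hv
      by_cases hmM : m j = M j
      · apply ih y hy
        intro i hi
        by_cases hij : i = j
        · subst hij
          left
          have h1 := (hy i).1
          have h2 := (hy i).2
          rw [hmM] at h1 ⊢
          linarith
        · exact hv i (by simp [hij, hi])
      · have hlt : m j < M j := lt_of_le_of_ne (le_trans (hy j).1 (hy j).2) hmM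
        set t : ℝ := (y j - m j) / (M j - m j) with ht
        have htpos : 0 ≤ t := div_nonneg (by linarith [(hy j).1]) (by linarith)
        have htle : t ≤ 1 := by
          rw [ht, div_le_one (by linarith)]
          linarith [(hy j).2]
        have hyj : y j = (1 - t) * m j + t * M j := by
          have h : t * (M j - m j) = y j - m j :=
            div_mul_cancel₀ _ (sub_ne_zero.mpr (ne_of_gt hlt))
          linear_combination -h
        have key : ∀ v : ℝ, (fun β : ι => ∏ i, if mask β i then Function.update y j v i else 1)
            = fun β => (if mask β j then v else 1) *
                ∏ i ∈ Finset.univ.erase j, (if mask β i then y i else 1) := by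
          intro v
          funext β
          rw [← Finset.mul_prod_erase Finset.univ _ (Finset.mem_univ j)]
          simp only [Function.update_self]
          congr 1
          refine Finset.prod_congr rfl fun i hi => ?_
          rw [Function.update_of_ne (Finset.ne_of_mem_erase hi)]
        have huse : ∀ v ∈ ({m j, M j} : Set ℝ),
            (fun β : ι => ∏ i, if mask β i then Function.update y j v i else 1) ∈
            convexHull ℝ (Set.range fun c : Fin n → Bool =>
              fun β => ∏ i, if mask β i then (if c i then M i else m i) else 1) := by
          intro v hv'
          apply ih
          · intro i
            by_cases hij : i = j
            · subst hij
              simp only [Function.update_self]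
              rcases hv' with h | h <;> subst h
              · exact ⟨le_refl _, le_of_lt hlt⟩
              · exact ⟨le_of_lt hlt, le_refl _⟩
            · rw [Function.update_of_ne hij]; exact hy i
          · intro i hi
            by_cases hij : i = j
            · subst hij
              simp only [Function.update_self]
              rcases hv' with h | h <;> subst h
              · left; rfl
              · right; rfl
            · rw [Function.update_of_ne hij]
              exact hv i (by simp [hij, hi])
        have hcomb : (fun β : ι => ∏ i, if mask β i then y i else 1)
            = (1 - t) • (fun β : ι => ∏ i, if mask β i then Function.update y j (m j) i else 1)
              + t • (fun β : ι => ∏ i, if mask β i then Function.update y j (M j) i else 1) := by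
          rw [key, key]
          funext β
          simp only [Pi.add_apply, Pi.smul_apply, smul_eq_mul]
          rw [← Finset.mul_prod_erase Finset.univ
            (fun i => if mask β i then y i else 1) (Finset.mem_univ j)]
          by_cases hb : mask β j
          · simp only [hb, if_true]
            rw [hyj]; ring
          · simp only [hb, Bool.false_eq_true, if_false]
            ring
        rw [hcomb]
        exact (convex_convexHull ℝ _)
          (huse (m j) (by left; rfl)) (huse (M j) (by right; rfl))
          (by linarith) htpos (by ring)

/-- For a multilinear pattern `P ⊆ {0,α₁} × ⋯ × {0,αₙ}` and a box `K`, the moment body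
`M_P(K)` is a polytope (a convex hull of finitely many points). -/
theorem momentBody_multilinearPattern_isPolytope (n : ℕ) (α : Fin n → ℕ)
    (P : Finset (Fin n → ℕ)) (hP : ∀ β ∈ P, ∀ i, β i = 0 ∨ β i = α i)
    (l u : Fin n → ℝ) (hlu : ∀ i, l i ≤ u i) :
    ∃ S : Finset (↥P → ℝ),
      convexHull ℝ ((fun x : Fin n → ℝ => (fun β : ↥P => ∏ i, x i ^ β.1 i)) ''
          {x | ∀ i, l i ≤ x i ∧ x i ≤ u i})
        = convexHull ℝ (↑S : Set (↥P → ℝ)) := by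
  classical
  -- minimizers / maximizers of t ↦ t ^ α i on [l i, u i]
  have hmin : ∀ i : Fin n, ∃ a ∈ Set.Icc (l i) (u i),
      ∀ t ∈ Set.Icc (l i) (u i), a ^ α i ≤ t ^ α i := by
    intro i
    obtain ⟨a, ha, hmin⟩ := isCompact_Icc.exists_isMinOn (f := fun t : ℝ => t ^ α i)
      ⟨l i, le_refl _, hlu i⟩ (continuous_pow (α i)).continuousOn
    exact ⟨a, ha, fun t ht => hmin ht⟩
  have hmax : ∀ i : Fin n, ∃ b ∈ Set.Icc (l i) (u i),
      ∀ t ∈ Set.Icc (l i) (u i), t ^ α i ≤ b ^ α i := by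
    intro i
    obtain ⟨b, hb, hmax⟩ := isCompact_Icc.exists_isMaxOn (f := fun t : ℝ => t ^ α i)
      ⟨l i, le_refl _, hlu i⟩ (continuous_pow (α i)).continuousOn
    exact ⟨b, hb, fun t ht => hmax ht⟩
  choose a ha hamin using hmin
  choose b hb hbmax using hmax
  set m : Fin n → ℝ := fun i => a i ^ α i with hm
  set M : Fin n → ℝ := fun i => b i ^ α i with hM
  set mask : ↥P → Fin n → Bool := fun β i => if β.1 i = 0 then false else true with hmask
  -- the candidate polytope vertices
  set S : Finset (↥P → ℝ) := Finset.image
    (fun c : Fin n → Bool => fun β : ↥P => ∏ i, if mask β i then (if c i then M i else m i) else 1)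
    Finset.univ with hS
  refine ⟨S, ?_⟩
  have hScoe : (↑S : Set (↥P → ℝ)) = Set.range fun c : Fin n → Bool =>
      fun β : ↥P => ∏ i, if mask β i then (if c i then M i else m i) else 1 := by
    rw [hS, Finset.coe_image, Finset.coe_univ, Set.image_univ]
  -- each moment point is f x = g (x ^ α)
  have hfx : ∀ x : Fin n → ℝ, (fun β : ↥P => ∏ i, x i ^ β.1 i)
      = fun β : ↥P => ∏ i, if mask β i then x i ^ α i else 1 := by
    intro x
    funext β
    refine Finset.prod_congr rfl fun i _ => ?_
    rcases hP β.1 β.2 i with h | h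
    · simp [hmask, h]
    · by_cases h0 : β.1 i = 0
      · simp [hmask, h0, ← h]
      · have hmt : mask β i = true := by simp [hmask, h0]
        rw [hmt, if_pos rfl, h]
  apply Set.Subset.antisymm
  · -- forward inclusion
    apply convexHull_min ?_ (convex_convexHull ℝ _)
    rintro _ ⟨x, hx, rfl⟩
    beta_reduce
    rw [hfx x, hScoe]
    exact multilinear_mem_hull mask m M Finset.univ (fun i => x i ^ α i)
      (fun i => ⟨hamin i (x i) ⟨(hx i).1, (hx i).2⟩, hbmax i (x i) ⟨(hx i).1, (hx i).2⟩⟩)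
      (fun i hi => absurd (Finset.mem_univ i) hi)
  · -- reverse inclusion: each vertex is a moment point
    apply convexHull_min ?_ (convex_convexHull ℝ _)
    intro p hp
    apply subset_convexHull
    rw [hScoe] at hp
    obtain ⟨c, rfl⟩ := hp
    refine ⟨fun i => if c i then b i else a i, ?_, ?_⟩
    · intro i
      by_cases hc : c i <;> simp [hc, (hb i).1, (hb i).2, (ha i).1, (ha i).2]
    · beta_reduce
      rw [hfx]
      funext β
      refine Finset.prod_congr rfl fun i _ => ?_
      by_cases hc : c i <;> simp [hc, hm, hM]
end

section
/- Let λ = (λ_0,...,λ_k) with λ_i > 0 and Σ λ_i = 1. The dual cone of GMC_λ = { (y,t) ∈ R₊ × R₊^{k+1} : y ≤ ∏ t_i^{λ_i} } is (GMC_λ)* = { (z,s) ∈ R × R₊^{k+1} : z + ∏ (s_i/λ_i)^{λ_i} ≥ 0 }. -/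
/-- The geometric-mean cone for weights `λ`. -/
def GMC (k : ℕ) (lam : Fin (k + 1) → ℝ) : Set (ℝ × (Fin (k + 1) → ℝ)) :=
  {p | 0 ≤ p.1 ∧ (∀ i, 0 ≤ p.2 i) ∧ p.1 ≤ ∏ i, p.2 i ^ lam i}

/-- Dual of the geometric-mean cone:
`(GMC_λ)* = {(z,s) ∈ ℝ × ℝ₊^{k+1} : z + ∏ (sᵢ/λᵢ)^{λᵢ} ≥ 0}`. -/
theorem GMC_dual (k : ℕ) (lam : Fin (k + 1) → ℝ)
    (hpos : ∀ i, 0 < lam i) (hsum : ∑ i, lam i = 1) :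
    {q : ℝ × (Fin (k + 1) → ℝ) | ∀ p ∈ GMC k lam,
        0 ≤ q.1 * p.1 + ∑ i, q.2 i * p.2 i}
      = {q : ℝ × (Fin (k + 1) → ℝ) | (∀ i, 0 ≤ q.2 i) ∧
          0 ≤ q.1 + ∏ i, (q.2 i / lam i) ^ lam i} := by
  ext q
  obtain ⟨z, s⟩ := q
  simp only [Set.mem_setOf_eq]
  constructor
  · intro h
    -- first: each coordinate is nonnegative
    have hs : ∀ i, 0 ≤ s i := by
      intro j
      have hmem : ((0 : ℝ), fun i => if i = j then (1:ℝ) else 0) ∈ GMC k lam := by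
        refine ⟨le_refl 0, fun i => by positivity, ?_⟩
        exact Finset.prod_nonneg fun i _ => Real.rpow_nonneg (by positivity) _
      have h1 : (0:ℝ) ≤ z * 0 + ∑ i, s i * (if i = j then (1:ℝ) else 0) := h _ hmem
      simpa [mul_ite, Finset.sum_ite_eq'] using h1
    refine ⟨hs, ?_⟩
    by_cases hall : ∀ i, 0 < s i
    · -- all positive: test with t i = c * lam i / s i
      set c : ℝ := ∏ i, (s i / lam i) ^ lam i with hc
      have hcpos : 0 < c :=
        Finset.prod_pos fun i _ => Real.rpow_pos_of_pos (div_pos (hall i) (hpos i)) _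
      have hstep : ∀ i : Fin (k+1), (c * lam i / s i) ^ lam i
          = c ^ lam i * ((s i / lam i) ^ lam i)⁻¹ := by
        intro i
        rw [mul_div_assoc, Real.mul_rpow hcpos.le (div_nonneg (hpos i).le (hall i).le)]
        congr 1
        rw [show lam i / s i = (s i / lam i)⁻¹ from by rw [inv_div]]
        exact Real.inv_rpow (div_nonneg (hall i).le (hpos i).le) _
      have hmem : ((1 : ℝ), fun i => c * lam i / s i) ∈ GMC k lam := by
        refine ⟨zero_le_one, fun i =>
          div_nonneg (mul_nonneg hcpos.le (hpos i).le) (hall i).le, ?_⟩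
        show (1:ℝ) ≤ ∏ i, (c * lam i / s i) ^ lam i
        rw [Finset.prod_congr rfl fun i _ => hstep i, Finset.prod_mul_distrib,
          ← Real.rpow_sum_of_pos hcpos, hsum, Real.rpow_one, Finset.prod_inv_distrib,
          ← hc, mul_inv_cancel₀ hcpos.ne']
      have h1 : (0:ℝ) ≤ z * 1 + ∑ i, s i * (c * lam i / s i) := h _ hmem
      have hsum' : ∑ i, s i * (c * lam i / s i) = c := by
        have he : ∀ i : Fin (k+1), s i * (c * lam i / s i) = c * lam i := fun i => by
          rw [mul_comm, div_mul_cancel₀ _ (hall i).ne']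
        rw [Finset.sum_congr rfl fun i _ => he i, ← Finset.mul_sum, hsum, mul_one]
      rw [hsum', mul_one] at h1
      exact h1
    · -- some coordinate vanishes
      push_neg at hall
      obtain ⟨j, hj⟩ := hall
      have hsj : s j = 0 := le_antisymm hj (hs j)
      have hprod : ∏ i, (s i / lam i) ^ lam i = 0 := by
        apply Finset.prod_eq_zero (Finset.mem_univ j)
        rw [hsj, zero_div, Real.zero_rpow (hpos j).ne']
      rw [hprod, add_zero]
      -- show 0 ≤ z using test points (1, t_ε)
      by_contra hz
      push_neg at hz
      set S : ℝ := ∑ i ∈ Finset.univ.erase j, s i with hS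
      have hSnn : 0 ≤ S := Finset.sum_nonneg fun i _ => hs i
      set ε : ℝ := -z / (S + 1) with hε
      have hεpos : 0 < ε := div_pos (neg_pos.2 hz) (by linarith)
      have hmem : ((1 : ℝ),
          fun i => if i = j then ε ^ ((lam j - 1) / lam j) else ε) ∈ GMC k lam := by
        refine ⟨zero_le_one, fun i => ?_, ?_⟩
        · by_cases hij : i = j <;> simp [hij, hεpos.le, Real.rpow_nonneg]
        · show (1:ℝ) ≤ ∏ i, (if i = j then ε ^ ((lam j - 1) / lam j) else ε) ^ lam i
          rw [← Finset.prod_erase_mul _ _ (Finset.mem_univ j)]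
          have h2 : ∏ i ∈ Finset.univ.erase j,
              (if i = j then ε ^ ((lam j - 1) / lam j) else ε) ^ lam i
              = ε ^ (1 - lam j) := by
            rw [Finset.prod_congr rfl (fun i hi => by
              rw [if_neg (Finset.ne_of_mem_erase hi)]),
              ← Real.rpow_sum_of_pos hεpos]
            congr 1
            have h3 := Finset.sum_erase_add Finset.univ lam (Finset.mem_univ j)
            rw [hsum] at h3
            linarith
          rw [h2, if_pos rfl, ← Real.rpow_mul hεpos.le,
            div_mul_cancel₀ _ (hpos j).ne', ← Real.rpow_add hεpos]
          norm_num
      have h1 : (0:ℝ) ≤ z * 1 +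
          ∑ i, s i * (if i = j then ε ^ ((lam j - 1) / lam j) else ε) := h _ hmem
      have hsum' : ∑ i, s i * (if i = j then ε ^ ((lam j - 1) / lam j) else ε)
          = ε * S := by
        rw [← Finset.sum_erase_add _ _ (Finset.mem_univ j), if_pos rfl, hsj,
          zero_mul, add_zero, hS, Finset.mul_sum]
        exact Finset.sum_congr rfl fun i hi => by
          rw [if_neg (Finset.ne_of_mem_erase hi)]; ring
      rw [mul_one, hsum'] at h1
      have hlt : ε * S < -z := by
        rw [hε, div_mul_eq_mul_div, div_lt_iff₀ (by linarith : (0:ℝ) < S + 1)]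
        nlinarith [neg_pos.2 hz]
      linarith
  · rintro ⟨hs, hc⟩ p ⟨hp1, hp2, hple⟩
    set c : ℝ := ∏ i, (s i / lam i) ^ lam i with hcdef
    set P : ℝ := ∏ i, p.2 i ^ lam i with hP
    have hPnn : 0 ≤ P := Finset.prod_nonneg fun i _ => Real.rpow_nonneg (hp2 i) _
    have hcnn : 0 ≤ c := Finset.prod_nonneg fun i _ =>
      Real.rpow_nonneg (div_nonneg (hs i) (hpos i).le) _
    have key : c * P ≤ ∑ i, s i * p.2 i := by
      have hAM := Real.geom_mean_le_arith_mean_weighted Finset.univ lam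
        (fun i => s i / lam i * p.2 i) (fun i _ => (hpos i).le) hsum
        (fun i _ => mul_nonneg (div_nonneg (hs i) (hpos i).le) (hp2 i))
      calc c * P = ∏ i, (s i / lam i * p.2 i) ^ lam i := by
            rw [hcdef, hP, ← Finset.prod_mul_distrib]
            exact Finset.prod_congr rfl fun i _ =>
              (Real.mul_rpow (div_nonneg (hs i) (hpos i).le) (hp2 i)).symm
        _ ≤ ∑ i, lam i * (s i / lam i * p.2 i) := hAM
        _ = ∑ i, s i * p.2 i := Finset.sum_congr rfl fun i _ => by
            show lam i * (s i / lam i * p.2 i) = s i * p.2 i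
            rw [← mul_assoc, mul_comm (lam i), div_mul_cancel₀ _ (hpos i).ne']
    rcases le_or_gt 0 z with hz | hz
    · have hnn : 0 ≤ ∑ i, s i * p.2 i :=
        Finset.sum_nonneg fun i _ => mul_nonneg (hs i) (hp2 i)
      have : 0 ≤ z * p.1 := mul_nonneg hz hp1
      linarith
    · have h1 : z * P ≤ z * p.1 := by nlinarith
      nlinarith
end

section
/- Let P = {2α, α+β, 2β} ⊆ N^n with α ≠ β be an SDSOS pattern, and suppose α+β ∉ 2N^n (some coordinate of α+β is odd). Then C_P(R^n) = { v ∈ R^P : v_{2α} ≥ 0, v_{2β} ≥ 0, v_{α+β}^2 ≤ v_{2α} v_{2β} }, and P_P(R^n) = { f ∈ R[x]_P : f_{2α} ≥ 0, f_{2β} ≥ 0, f_{α+β}^2 ≤ 4 f_{2α} f_{2β} }. -/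
/-!
Writing `u = x^α` and `w = x^β`, the monomial vector of a point is `(u², uw, w²)`, which lies in
the closed convex cone `K = {v | v₁ ≥ 0, v₃ ≥ 0, v₂² ≤ v₁ v₃}`. Conversely, if `α_j + β_j` is odd
then `α_j - β_j` is odd, so varying only `x_j` over `ℝ` realises every ray through `(t², t, 1)`
with `t ≠ 0`; in the closure these rays, together with the limit ray `(1, 0, 0)`, generate `K`.
The nonnegative polynomials form the dual of the moment cone, hence the dual of `K`, which is read
off from the test vectors `(t², t, 1)` and `(1, 0, 0)` via the discriminant.
-/

open Set Filter Topology PointedCone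

lemma exists_pow_eq_of_odd {k : ℕ} (hk : Odd k) (t : ℝ) : ∃ s : ℝ, s ^ k = t := by
  have hk0 : k ≠ 0 := by rintro rfl; simp at hk
  rcases le_or_gt 0 t with ht | ht
  · exact ⟨t ^ (k⁻¹ : ℝ), Real.rpow_inv_natCast_pow ht hk0⟩
  · refine ⟨-(-t) ^ (k⁻¹ : ℝ), ?_⟩
    rw [hk.neg_pow, Real.rpow_inv_natCast_pow (neg_nonneg.2 ht.le) hk0, neg_neg]

lemma exists_pow_eq_mul_pow {a b : ℕ} (hab : Odd (a + b)) {t : ℝ} (ht : t ≠ 0) :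
    ∃ s : ℝ, s ≠ 0 ∧ s ^ a = t * s ^ b := by
  rw [Nat.odd_iff] at hab
  rcases lt_or_gt_of_ne (show a ≠ b by omega) with hlt | hlt
  · obtain ⟨s, hs⟩ := exists_pow_eq_of_odd (k := b - a) (Nat.odd_iff.2 (by omega)) t⁻¹
    have hs0 : s ≠ 0 := by rintro rfl; simp [zero_pow (by omega : b - a ≠ 0)] at hs; exact ht hs.symm
    refine ⟨s, hs0, ?_⟩
    rw [← pow_sub_mul_pow s hlt.le, hs, ← mul_assoc, mul_inv_cancel₀ ht, one_mul]
  · obtain ⟨s, hs⟩ := exists_pow_eq_of_odd (k := a - b) (Nat.odd_iff.2 (by omega)) t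
    have hs0 : s ≠ 0 := by rintro rfl; simp [zero_pow (by omega : a - b ≠ 0)] at hs; exact ht hs.symm
    exact ⟨s, hs0, by rw [← pow_sub_mul_pow s hlt.le, hs]⟩

lemma IsClosed.apply_mem_of_forall_ne {X Y : Type*} [TopologicalSpace X] [TopologicalSpace Y]
    {f : X → Y} {s : Set Y} {a : X} [NeBot (𝓝[≠] a)] (hs : IsClosed s) (hf : Continuous f)
    (h : ∀ x ≠ a, f x ∈ s) (x : X) : f x ∈ s := by
  rcases eq_or_ne x a with rfl | hx
  · exact hs.closure_subset <|
      map_mem_closure (s := {x}ᶜ) hf (closure_compl_singleton x ▸ mem_univ x) h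
  · exact h x hx

namespace PointedCone

lemma mem_hull_range_iff {R E ι : Type*} [Semiring R] [PartialOrder R] [IsOrderedRing R]
    [AddCommMonoid E] [Module R E] {g : ι → E} {v : E} :
    v ∈ hull R (range g) ↔
      ∃ (m : ℕ) (c : Fin m → R) (x : Fin m → ι), (∀ t, 0 ≤ c t) ∧ v = ∑ t, c t • g (x t) := by
  rw [Submodule.mem_span_set']
  constructor
  · rintro ⟨m, c, y, rfl⟩
    choose x hx using fun t => (y t).2
    exact ⟨m, fun t => c t, x, fun t => (c t).2, by simp [hx]⟩
  · rintro ⟨m, c, x, hc, rfl⟩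
    exact ⟨m, fun t => ⟨c t, hc t⟩, fun t => ⟨g (x t), mem_range_self _⟩, rfl⟩

lemma dual_closure {R M N : Type*} [CommSemiring R] [PartialOrder R] [IsOrderedRing R]
    [TopologicalSpace R] [ClosedIciTopology R] [AddCommMonoid M] [Module R M] [TopologicalSpace M]
    [AddCommMonoid N] [Module R N] {p : M →ₗ[R] N →ₗ[R] R}
    (hp : ∀ y, Continuous fun x => p x y) (s : Set M) : dual p (closure s) = dual p s :=
  le_antisymm (dual_antitone subset_closure) fun y hy =>
    closure_minimal (fun _ hx => hy hx) (isClosed_Ici.preimage (hp y))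

end PointedCone

lemma sq_add_le_mul_add {a₁ a₂ a₃ b₁ b₂ b₃ : ℝ} (ha₁ : 0 ≤ a₁) (ha₃ : 0 ≤ a₃)
    (ha : a₂ ^ 2 ≤ a₁ * a₃) (hb₁ : 0 ≤ b₁) (hb₃ : 0 ≤ b₃) (hb : b₂ ^ 2 ≤ b₁ * b₃) :
    (a₂ + b₂) ^ 2 ≤ (a₁ + b₁) * (a₃ + b₃) := by
  have hprod : (a₂ * b₂) ^ 2 ≤ (a₁ * b₃) * (a₃ * b₁) := by
    nlinarith [mul_le_mul ha hb (sq_nonneg b₂) (mul_nonneg ha₁ ha₃)]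
  have hcross : 2 * (a₂ * b₂) ≤ a₁ * b₃ + a₃ * b₁ := by
    nlinarith [sq_nonneg (a₁ * b₃ - a₃ * b₁), mul_nonneg ha₁ hb₃, mul_nonneg ha₃ hb₁]
  nlinarith

def psdCone : PointedCone ℝ (ℝ × ℝ × ℝ) where
  carrier := {v | 0 ≤ v.1 ∧ 0 ≤ v.2.2 ∧ v.2.1 ^ 2 ≤ v.1 * v.2.2}
  zero_mem' := by simp
  add_mem' := fun ⟨ha₁, ha₃, ha⟩ ⟨hb₁, hb₃, hb⟩ =>
    ⟨add_nonneg ha₁ hb₁, add_nonneg ha₃ hb₃, sq_add_le_mul_add ha₁ ha₃ ha hb₁ hb₃ hb⟩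
  smul_mem' := fun ⟨c, hc⟩ v ⟨h₁, h₃, h⟩ => by
    refine ⟨mul_nonneg hc h₁, mul_nonneg hc h₃, ?_⟩
    simp only [Nonneg.mk_smul, Prod.smul_fst, Prod.smul_snd, smul_eq_mul]
    nlinarith [mul_le_mul_of_nonneg_left h (sq_nonneg c)]

lemma mem_psdCone {v : ℝ × ℝ × ℝ} :
    v ∈ psdCone ↔ 0 ≤ v.1 ∧ 0 ≤ v.2.2 ∧ v.2.1 ^ 2 ≤ v.1 * v.2.2 := Iff.rfl

lemma isClosed_psdCone : IsClosed (psdCone : Set (ℝ × ℝ × ℝ)) :=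
  (isClosed_le continuous_const continuous_fst).inter <|
    (isClosed_le continuous_const continuous_snd.snd).inter <|
      isClosed_le (continuous_snd.fst.pow 2) (continuous_fst.mul continuous_snd.snd)

-- `coeffPairing v f` is the value of the polynomial with coefficients `f` at a point whose
-- monomial vector is `v`.
def coeffPairing : (ℝ × ℝ × ℝ) →ₗ[ℝ] (ℝ × ℝ × ℝ) →ₗ[ℝ] ℝ :=
  LinearMap.mk₂ ℝ (fun v f => f.1 * v.1 + f.2.1 * v.2.1 + f.2.2 * v.2.2)
    (fun _ _ _ => by simp only [Prod.fst_add, Prod.snd_add]; ring)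
    (fun _ _ _ => by simp only [Prod.smul_fst, Prod.smul_snd, smul_eq_mul]; ring)
    (fun _ _ _ => by simp only [Prod.fst_add, Prod.snd_add]; ring)
    (fun _ _ _ => by simp only [Prod.smul_fst, Prod.smul_snd, smul_eq_mul]; ring)

lemma coeffPairing_apply (v f : ℝ × ℝ × ℝ) :
    coeffPairing v f = f.1 * v.1 + f.2.1 * v.2.1 + f.2.2 * v.2.2 := rfl

lemma continuous_coeffPairing_left (f : ℝ × ℝ × ℝ) : Continuous fun v => coeffPairing v f :=
  (coeffPairing.flip f).continuous_of_finiteDimensional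

lemma mem_dual_psdCone {f : ℝ × ℝ × ℝ} :
    f ∈ dual coeffPairing psdCone ↔ 0 ≤ f.1 ∧ 0 ≤ f.2.2 ∧ f.2.1 ^ 2 ≤ 4 * (f.1 * f.2.2) := by
  simp only [mem_dual, SetLike.mem_coe, coeffPairing_apply]
  constructor
  · intro hf
    have hcurve (t : ℝ) : 0 ≤ f.1 * (t * t) + f.2.1 * t + f.2.2 := by
      simpa [sq, mul_comm] using hf (x := (t ^ 2, t, 1)) ⟨sq_nonneg t, zero_le_one, by simp⟩
    have h₁ : 0 ≤ f.1 := by simpa using hf (x := (1, 0, 0)) ⟨zero_le_one, le_rfl, by simp⟩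
    have h₃ : 0 ≤ f.2.2 := by simpa using hcurve 0
    refine ⟨h₁, h₃, ?_⟩
    have := discrim_le_zero hcurve
    rw [discrim] at this
    linarith
  · rintro ⟨h₁, h₃, h⟩ v ⟨hv₁, hv₃, hv⟩
    have hsq : (f.2.1 * v.2.1) ^ 2 ≤ (f.1 * v.1 + f.2.2 * v.2.2) ^ 2 := by
      nlinarith [mul_le_mul h hv (sq_nonneg _) (by positivity), sq_nonneg (f.1 * v.1 - f.2.2 * v.2.2)]
    nlinarith [neg_abs_le (f.2.1 * v.2.1), abs_le_of_sq_le_sq' hsq (by positivity)]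

section Monomials

variable {n : ℕ} (α β : Fin n → ℕ)

def monomialTriple (x : Fin n → ℝ) : ℝ × ℝ × ℝ :=
  (∏ i, x i ^ (2 * α i), ∏ i, x i ^ (α i + β i), ∏ i, x i ^ (2 * β i))

lemma monomialTriple_eq (x : Fin n → ℝ) :
    monomialTriple α β x =
      ((∏ i, x i ^ α i) ^ 2, (∏ i, x i ^ α i) * ∏ i, x i ^ β i, (∏ i, x i ^ β i) ^ 2) := by
  simp only [monomialTriple, pow_mul', pow_add, Finset.prod_pow, Finset.prod_mul_distrib]

lemma monomialTriple_mem_psdCone (x : Fin n → ℝ) : monomialTriple α β x ∈ psdCone := by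
  rw [monomialTriple_eq, mem_psdCone]
  exact ⟨sq_nonneg _, sq_nonneg _, by ring_nf; rfl⟩

lemma monomialTriple_mulSingle (j : Fin n) (s : ℝ) :
    monomialTriple α β (Pi.mulSingle j s) = ((s ^ α j) ^ 2, s ^ α j * s ^ β j, (s ^ β j) ^ 2) := by
  simp only [monomialTriple_eq, Pi.mulSingle_apply, ite_pow, one_pow, Finset.prod_ite_eq']
  simp

variable {α β} {j : Fin n}

-- At `x = Pi.mulSingle j s` the triple is a positive multiple of `(t², t, 1)` once
-- `s ^ α j = t * s ^ β j`, which is solvable because `α j - β j` is odd.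
lemma curve_mem_hull_range_monomialTriple (hj : ¬ 2 ∣ α j + β j) {t : ℝ} (ht : t ≠ 0) :
    (t ^ 2, t, 1) ∈ hull ℝ (range (monomialTriple α β)) := by
  obtain ⟨s, hs, hst⟩ := exists_pow_eq_mul_pow (Nat.odd_iff.2 (Nat.two_dvd_ne_zero.1 hj)) ht
  have hw : s ^ β j ≠ 0 := pow_ne_zero _ hs
  have hscale : monomialTriple α β (Pi.mulSingle j s) = (s ^ β j) ^ 2 • (t ^ 2, t, 1) := by
    rw [monomialTriple_mulSingle, hst]
    simp only [Prod.smul_mk, smul_eq_mul]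
    ext <;> ring
  have := (hull ℝ (range (monomialTriple α β))).smul_mem (inv_nonneg.2 (sq_nonneg (s ^ β j)))
    (subset_hull (mem_range_self (Pi.mulSingle j s)))
  rwa [hscale, inv_smul_smul₀ (pow_ne_zero 2 hw)] at this

lemma psdCone_le_closure_hull_range_monomialTriple (hj : ¬ 2 ∣ α j + β j) :
    psdCone ≤ (hull ℝ (range (monomialTriple α β))).closure := by
  set C := (hull ℝ (range (monomialTriple α β))).closure
  have hC : IsClosed (C : Set (ℝ × ℝ × ℝ)) := isClosed_closure
  have hcurve : ∀ t : ℝ, (t ^ 2, t, 1) ∈ C :=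
    hC.apply_mem_of_forall_ne (f := fun t : ℝ => (t ^ 2, t, 1)) (a := 0) (by fun_prop)
      fun t ht => subset_closure (curve_mem_hull_range_monomialTriple hj ht)
  -- `(1, s, s²) = s² • (s⁻², s⁻¹, 1)` tends to `(1, 0, 0)` as `s → 0`.
  have hleft : ((1, 0, 0) : ℝ × ℝ × ℝ) ∈ C := by
    refine (by simpa using ·) <|
      hC.apply_mem_of_forall_ne (f := fun s : ℝ => (1, s, s ^ 2)) (a := 0) (by fun_prop)
        (fun s hs => ?_) 0
    have hrescale : ((1, s, s ^ 2) : ℝ × ℝ × ℝ) = s ^ 2 • (s⁻¹ ^ 2, s⁻¹, 1) := by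
      simp only [Prod.smul_mk, smul_eq_mul]
      ext <;> field_simp
    rw [hrescale]
    exact C.smul_mem (sq_nonneg s) (hcurve s⁻¹)
  rintro ⟨p, q, r⟩ ⟨hp, hr, hq⟩
  rcases hr.eq_or_lt with rfl | hr
  · have hq : q = 0 := by simpa using hq
    subst hq
    simpa using C.smul_mem hp hleft
  · have hdef : 0 ≤ p - q ^ 2 / r := by rw [sub_nonneg, div_le_iff₀ hr]; exact hq
    convert C.add_mem (C.smul_mem hr.le (hcurve (q / r))) (C.smul_mem hdef hleft) using 1
    simp only [Prod.smul_mk, smul_eq_mul, Prod.mk_add_mk]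
    ext <;> field_simp <;> ring

lemma closure_hull_range_monomialTriple (hj : ¬ 2 ∣ α j + β j) :
    closure (hull ℝ (range (monomialTriple α β)) : Set (ℝ × ℝ × ℝ)) = psdCone :=
  (closure_minimal (Submodule.span_le.2 (range_subset_iff.2 (monomialTriple_mem_psdCone α β)))
    isClosed_psdCone).antisymm (psdCone_le_closure_hull_range_monomialTriple hj)

lemma dual_range_monomialTriple (hj : ¬ 2 ∣ α j + β j) :
    dual coeffPairing (range (monomialTriple α β)) = dual coeffPairing psdCone := by
  rw [← dual_hull, ← dual_closure continuous_coeffPairing_left,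
    closure_hull_range_monomialTriple hj]

end Monomials

theorem sdsos_pattern_cones_general (n : ℕ) (α β : Fin n → ℕ)
    (hodd : ∃ i, ¬ 2 ∣ (α i + β i)) :
    closure {v : ℝ × ℝ × ℝ |
        ∃ (m : ℕ) (c : Fin m → ℝ) (x : Fin m → (Fin n → ℝ)),
          (∀ t, 0 ≤ c t) ∧
          v = ∑ t, c t • ((∏ i, x t i ^ (2 * α i), ∏ i, x t i ^ (α i + β i),
              ∏ i, x t i ^ (2 * β i)) : ℝ × ℝ × ℝ)}
      = {v : ℝ × ℝ × ℝ | 0 ≤ v.1 ∧ 0 ≤ v.2.2 ∧ v.2.1 ^ 2 ≤ v.1 * v.2.2}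
    ∧ {f : ℝ × ℝ × ℝ | ∀ x : Fin n → ℝ,
          0 ≤ f.1 * ∏ i, x i ^ (2 * α i) + f.2.1 * ∏ i, x i ^ (α i + β i) +
            f.2.2 * ∏ i, x i ^ (2 * β i)}
      = {f : ℝ × ℝ × ℝ | 0 ≤ f.1 ∧ 0 ≤ f.2.2 ∧ f.2.1 ^ 2 ≤ 4 * (f.1 * f.2.2)} := by
  obtain ⟨j, hj⟩ := hodd
  constructor
  · have hcone : {v : ℝ × ℝ × ℝ | ∃ (m : ℕ) (c : Fin m → ℝ) (x : Fin m → (Fin n → ℝ)),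
        (∀ t, 0 ≤ c t) ∧ v = ∑ t, c t • monomialTriple α β (x t)} =
        hull ℝ (range (monomialTriple α β)) :=
      Set.ext fun _ => mem_hull_range_iff.symm
    exact hcone ▸ closure_hull_range_monomialTriple hj
  · ext f
    rw [mem_ofPred_eq, mem_ofPred_eq, ← mem_dual_psdCone, ← dual_range_monomialTriple hj, mem_dual,
      forall_mem_range]
    rfl

/-- SDSOS pattern `P = {2α, α+β, 2β}` with `α ≠ β` and `α+β` having an odd coordinate:
the moment cone is `{v : v_{2α} ≥ 0, v_{2β} ≥ 0, v_{α+β}² ≤ v_{2α} v_{2β}}` and the cone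
of polynomials supported on `P` nonnegative on `ℝⁿ` is
`{f : f_{2α} ≥ 0, f_{2β} ≥ 0, f_{α+β}² ≤ 4 f_{2α} f_{2β}}`. Coordinates of `ℝ^P` are
ordered as `(v_{2α}, v_{α+β}, v_{2β})`. -/
theorem sdsos_pattern_cones (n : ℕ) (α β : Fin n → ℕ) (hne : α ≠ β)
    (hodd : ∃ i, ¬ 2 ∣ (α i + β i)) :
    closure {v : ℝ × ℝ × ℝ |
        ∃ (m : ℕ) (c : Fin m → ℝ) (x : Fin m → (Fin n → ℝ)),
          (∀ t, 0 ≤ c t) ∧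
          v = ∑ t, c t • ((∏ i, x t i ^ (2 * α i), ∏ i, x t i ^ (α i + β i),
              ∏ i, x t i ^ (2 * β i)) : ℝ × ℝ × ℝ)}
      = {v : ℝ × ℝ × ℝ | 0 ≤ v.1 ∧ 0 ≤ v.2.2 ∧ v.2.1 ^ 2 ≤ v.1 * v.2.2}
    ∧ {f : ℝ × ℝ × ℝ | ∀ x : Fin n → ℝ,
          0 ≤ f.1 * ∏ i, x i ^ (2 * α i) + f.2.1 * ∏ i, x i ^ (α i + β i) +
            f.2.2 * ∏ i, x i ^ (2 * β i)}
      = {f : ℝ × ℝ × ℝ | 0 ≤ f.1 ∧ 0 ≤ f.2.2 ∧ f.2.1 ^ 2 ≤ 4 * (f.1 * f.2.2)} :=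
  sdsos_pattern_cones_general n α β hodd
end

section
/- Let B ⊆ N^n be finite with 0 ∈ B and f ∈ R[x]_{B+B}. Then sup { λ ∈ R : f − λ ∈ Σ_B } = inf { L_v(f) : v ∈ R^{B+B}, v_0 = 1, L_v(M_B) ⪰ 0 }, where Σ_B is the cone of sums of squares of polynomials supported on B and L_v(M_B) is the moment matrix (v_{β+β'})_{β,β'∈B}. -/
/-!
Weak duality: if `f - λ = ∑ gᵢ²` and `v₀ = 1`, `M_B(v) ⪰ 0`, then `L_v(f) - λ = ∑ L_v(gᵢ²) ≥ 0`,
because `L_v(g²)` is the quadratic form of `M_B(v)` at the coefficient vector of `g`.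

Strong duality: `Σ_B` is the image of the PSD cone under the Gram map `G ↦ m_Bᵀ G m_B`. A PSD `G`
with `m_Bᵀ G m_B = 0` is zero (a vanishing sum of squares has vanishing terms), so the image is
closed in the finite-dimensional coefficient space `ℝ^(B+B)`, and Farkas' lemma shows that a
polynomial supported on `B+B` on which every `L_v` with `M_B(v) ⪰ 0` is nonnegative lies in `Σ_B`.
For `c` the infimum of the moment problem, every such `v` has `L_v(f) ≥ c v₀` (normalise if
`v₀ > 0`, move along `v` from a feasible point if `v₀ = 0`), so `f - c ∈ Σ_B` and the supremum is
attained at `c`. When the infimum is `-∞` no `λ` is feasible and both sides are the junk value `0`.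
-/

open Set Metric Finset Matrix Pointwise

theorem nonneg_of_forall_le_add_mul {a b c : ℝ} (h : ∀ s : ℝ, 0 ≤ s → c ≤ a + s * b) : 0 ≤ b := by
  by_contra! hb
  have hca := h 0 le_rfl
  have := h ((a - c + 1) / -b) (div_nonneg (by linarith) (by linarith))
  rw [div_mul_eq_mul_div, div_neg, mul_div_assoc, div_self hb.ne, mul_one] at this
  linarith

namespace PointedCone

variable {E F : Type*} [AddCommGroup E] [Module ℝ E] [AddCommGroup F] [Module ℝ F]

theorem sSup_eq_sInf_of_mem_dual (p : E →ₗ[ℝ] F →ₗ[ℝ] ℝ) (C : PointedCone ℝ F) {e : E}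
    (he : e ∈ dual p.flip (C : Set F)) (hC : ∃ y ∈ C, p e y = 1) (x : E) :
    sSup {t : ℝ | x - t • e ∈ dual p.flip (C : Set F)}
      = sInf {r : ℝ | ∃ y ∈ C, p e y = 1 ∧ r = p x y} := by
  set S := {t : ℝ | x - t • e ∈ dual p.flip (C : Set F)}
  set T := {r : ℝ | ∃ y ∈ C, p e y = 1 ∧ r = p x y}
  have pairing_sub (t : ℝ) (y : F) : p (x - t • e) y = p x y - t * p e y := by simp
  have weak : ∀ t ∈ S, ∀ r ∈ T, t ≤ r := by
    rintro t ht r ⟨y, hy, hey, rfl⟩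
    have := ht hy
    rw [LinearMap.flip_apply, pairing_sub, hey] at this
    linarith
  obtain ⟨y₀, hy₀, hey₀⟩ := hC
  by_cases hbdd : BddBelow T
  swap
  · have : S = ∅ := Set.eq_empty_of_forall_notMem fun t ht => hbdd ⟨t, weak t ht⟩
    rw [this, Real.sSup_empty, Real.sInf_of_not_bddBelow hbdd]
  have hc : ∀ y ∈ C, p e y = 1 → sInf T ≤ p x y := fun y hy hey => csInf_le hbdd ⟨y, hy, hey, rfl⟩
  suffices sInf T ∈ S from
    IsGreatest.csSup_eq ⟨this, fun t ht => le_csInf ⟨_, y₀, hy₀, hey₀, rfl⟩ (weak t ht)⟩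
  intro y hy
  rw [LinearMap.flip_apply, pairing_sub, sub_nonneg]
  rcases (he hy).eq_or_lt with hey | hey <;> rw [LinearMap.flip_apply] at hey
  · -- the whole ray `y₀ + s • y`, `s ≥ 0`, is feasible
    rw [← hey, mul_zero]
    refine nonneg_of_forall_le_add_mul (a := p x y₀) (c := sInf T) fun s hs => ?_
    simpa using hc (y₀ + s • y) (C.add_mem hy₀ (C.smul_mem hs hy)) (by simp [hey₀, ← hey])
  · have := hc ((p e y)⁻¹ • y) (C.smul_mem (inv_nonneg.2 hey.le) hy)
      (by simp [inv_mul_cancel₀ hey.ne'])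
    rwa [map_smul, smul_eq_mul, inv_mul_eq_div, le_div_iff₀ hey] at this

end PointedCone

namespace ProperCone

variable {E F : Type*} [NormedAddCommGroup E] [NormedSpace ℝ E] [FiniteDimensional ℝ E]
  [NormedAddCommGroup F] [NormedSpace ℝ F]

theorem exists_pos_mul_norm_le (C : ProperCone ℝ E) (f : E →L[ℝ] F)
    (hf : ∀ x ∈ C, f x = 0 → x = 0) : ∃ c > 0, ∀ x ∈ C, c * ‖x‖ ≤ ‖f x‖ := by
  have hcpt : IsCompact ((C : Set E) ∩ sphere 0 1) := (isCompact_sphere 0 1).inter_left C.isClosed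
  obtain ⟨c, hc, hbound⟩ := hcpt.exists_forall_le' (a := 0) f.continuous.norm.continuousOn
    fun x hx => norm_pos_iff.2 fun h0 => by simpa [hf x hx.1 h0] using hx.2
  refine ⟨c, hc, fun x hx => ?_⟩
  rcases eq_or_ne x 0 with rfl | hx0
  · simp
  have hnorm : 0 < ‖x‖ := norm_pos_iff.2 hx0
  have := hbound (‖x‖⁻¹ • x) ⟨C.smul_mem hx (inv_nonneg.2 hnorm.le), by simp [norm_smul, hnorm.ne']⟩
  rwa [map_smul, norm_smul, norm_inv, norm_norm, inv_mul_eq_div, le_div_iff₀ hnorm] at this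

theorem isClosed_image_of_eq_zero (C : ProperCone ℝ E) (f : E →L[ℝ] F)
    (hf : ∀ x ∈ C, f x = 0 → x = 0) : IsClosed (f '' C) := by
  obtain ⟨c, hc, hbound⟩ := C.exists_pos_mul_norm_le f hf
  refine isClosed_of_closure_subset fun y hy => ?_
  set R := ‖y‖ + 1
  have hcpt : IsCompact (f '' ((C : Set E) ∩ closedBall 0 (R / c))) :=
    ((isCompact_closedBall 0 _).inter_left C.isClosed).image f.continuous
  have hsub : ball 0 R ∩ f '' C ⊆ f '' ((C : Set E) ∩ closedBall 0 (R / c)) := by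
    rintro _ ⟨hR, x, hx, rfl⟩
    refine ⟨x, ⟨hx, ?_⟩, rfl⟩
    rw [mem_closedBall_zero_iff, le_div_iff₀ hc, mul_comm]
    rw [mem_ball_zero_iff] at hR
    exact (hbound x hx).trans hR.le
  have hy' : y ∈ ball 0 R ∩ closure (f '' C) := ⟨by simp [R], hy⟩
  exact image_mono inter_subset_left <|
    closure_minimal hsub hcpt.isClosed (isOpen_ball.inter_closure hy')

end ProperCone

namespace Matrix

variable {ι : Type*} [Fintype ι]

theorem isClosed_setOf_posSemidef : IsClosed {A : Matrix ι ι ℝ | A.PosSemidef} := by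
  simp only [posSemidef_iff_dotProduct_mulVec, Set.ofPred_and, Set.ofPred_forall]
  exact (isClosed_eq continuous_id.matrix_conjTranspose continuous_id).inter <|
    isClosed_iInter fun x => isClosed_le continuous_const <|
      continuous_const.dotProduct (continuous_id.matrix_mulVec continuous_const)

def posSemidefCone (ι : Type*) [Fintype ι] : ProperCone ℝ (Matrix ι ι ℝ) where
  carrier := {A | A.PosSemidef}
  add_mem' := PosSemidef.add
  zero_mem' := PosSemidef.zero
  smul_mem' c _ hA := hA.smul c.2
  isClosed' := isClosed_setOf_posSemidef

theorem PosSemidef.exists_eq_sum_vecMulVec {A : Matrix ι ι ℝ} (hA : A.PosSemidef) :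
    ∃ a : ι → ι → ℝ, A = ∑ j, vecMulVec (a j) (a j) := by
  classical
  open scoped MatrixOrder in
  obtain ⟨R, rfl⟩ := CStarAlgebra.nonneg_iff_eq_star_mul_self.mp hA.nonneg
  exact ⟨R, by ext i j; simp [mul_apply, vecMulVec_apply, sum_apply]⟩

end Matrix

namespace MvPolynomial

variable {σ : Type*}

theorem sum_support_coeff_mul_of_subset {q : MvPolynomial σ ℝ} {s : Finset (σ →₀ ℕ)}
    (hq : q.support ⊆ s) (v : (σ →₀ ℕ) → ℝ) :
    ∑ γ ∈ q.support, q.coeff γ * v γ = ∑ γ ∈ s, q.coeff γ * v γ :=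
  sum_subset hq fun γ _ hγ => by rw [notMem_support_iff.1 hγ, zero_mul]

/-- `rieszPairing q v` is the paper's `L_v(q)`. -/
noncomputable def rieszPairing : MvPolynomial σ ℝ →ₗ[ℝ] ((σ →₀ ℕ) → ℝ) →ₗ[ℝ] ℝ := by
  classical
  exact LinearMap.mk₂ ℝ (fun q v => ∑ γ ∈ q.support, q.coeff γ * v γ)
    (fun p q v => by
      rw [sum_support_coeff_mul_of_subset support_add,
        sum_support_coeff_mul_of_subset (subset_union_left (s₂ := q.support)),
        sum_support_coeff_mul_of_subset (subset_union_right (s₁ := p.support)), ← sum_add_distrib]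
      simp only [coeff_add, add_mul])
    (fun c q v => by
      rw [sum_support_coeff_mul_of_subset support_smul, smul_eq_mul, mul_sum]
      simp only [coeff_smul, smul_eq_mul, mul_assoc])
    (fun q v w => by simp only [Pi.add_apply, mul_add, sum_add_distrib])
    (fun c q v => by simp only [Pi.smul_apply, smul_eq_mul, mul_sum, mul_left_comm])

theorem rieszPairing_apply_of_support_subset {q : MvPolynomial σ ℝ} {s : Finset (σ →₀ ℕ)}
    (hq : q.support ⊆ s) (v : (σ →₀ ℕ) → ℝ) :
    rieszPairing q v = ∑ γ ∈ s, q.coeff γ * v γ :=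
  sum_support_coeff_mul_of_subset hq v

theorem rieszPairing_monomial (γ : σ →₀ ℕ) (c : ℝ) (v : (σ →₀ ℕ) → ℝ) :
    rieszPairing (monomial γ c) v = c * v γ := by
  classical
  rw [rieszPairing_apply_of_support_subset support_monomial_subset, sum_singleton, coeff_monomial,
    if_pos rfl]

theorem rieszPairing_one (v : (σ →₀ ℕ) → ℝ) : rieszPairing (1 : MvPolynomial σ ℝ) v = v 0 := by
  rw [← C_1, C_apply, rieszPairing_monomial, one_mul]

theorem rieszPairing_single_zero [DecidableEq σ] (q : MvPolynomial σ ℝ) :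
    rieszPairing q (Pi.single 0 1) = q.coeff 0 := by
  rw [rieszPairing_apply_of_support_subset (subset_insert 0 q.support),
    sum_eq_single_of_mem 0 (mem_insert_self 0 _) fun γ _ hγ => by simp [hγ]]
  simp

section Gram

variable (B : Finset (σ →₀ ℕ))

noncomputable def ofCoeffs (c : B → ℝ) : MvPolynomial σ ℝ := ∑ b, monomial b.1 (c b)

theorem support_ofCoeffs_subset (c : B → ℝ) : (ofCoeffs B c).support ⊆ B := by
  classical
  refine support_sum.trans fun γ hγ => ?_
  obtain ⟨b, -, hb⟩ := mem_biUnion.1 hγ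
  rw [mem_singleton.1 (support_monomial_subset hb)]
  exact b.2

theorem coeff_ofCoeffs (c : B → ℝ) (b : B) : (ofCoeffs B c).coeff b = c b := by
  classical
  rw [ofCoeffs, coeff_sum, sum_eq_single b (fun b' _ hb' => by
    rw [coeff_monomial, if_neg (Subtype.coe_injective.ne hb')]) (by simp)]
  simp

variable {B} in
theorem ofCoeffs_coeff {g : MvPolynomial σ ℝ} (hg : g.support ⊆ B) :
    ofCoeffs B (fun b => g.coeff b) = g := by
  rw [ofCoeffs, sum_coe_sort B fun b => monomial b (g.coeff b),
    ← sum_subset hg fun b _ hb => by rw [notMem_support_iff.1 hb, monomial_zero],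
    support_sum_monomial_coeff]

/-- The polynomial `m_Bᵀ G m_B`, where `m_B` is the vector of monomials indexed by `B`. -/
noncomputable def gramPoly : Matrix B B ℝ →ₗ[ℝ] MvPolynomial σ ℝ where
  toFun G := ∑ b, ∑ b', monomial (b.1 + b'.1) (G b b')
  map_add' G H := by simp only [Matrix.add_apply, map_add, sum_add_distrib]
  map_smul' c G := by simp only [Matrix.smul_apply, ← smul_monomial, RingHom.id_apply, smul_sum]

theorem gramPoly_apply (G : Matrix B B ℝ) :
    gramPoly B G = ∑ b, ∑ b', monomial (b.1 + b'.1) (G b b') := rfl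

theorem support_gramPoly_subset [DecidableEq σ] (G : Matrix B B ℝ) :
    (gramPoly B G).support ⊆ B + B := by
  refine support_sum.trans <| biUnion_subset.2 fun b _ =>
    support_sum.trans <| biUnion_subset.2 fun b' _ => support_monomial_subset.trans ?_
  exact singleton_subset_iff.2 (add_mem_add b.2 b'.2)

theorem gramPoly_vecMulVec (c : B → ℝ) : gramPoly B (vecMulVec c c) = ofCoeffs B c ^ 2 := by
  simp only [gramPoly_apply, ofCoeffs, sq, sum_mul_sum, monomial_mul, vecMulVec_apply]

theorem rieszPairing_gramPoly (G : Matrix B B ℝ) (v : (σ →₀ ℕ) → ℝ) :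
    rieszPairing (gramPoly B G) v = ∑ b, ∑ b', G b b' * v (b.1 + b'.1) := by
  simp only [gramPoly_apply, map_sum, LinearMap.sum_apply, rieszPairing_monomial]

def sumSq : Set (MvPolynomial σ ℝ) :=
  {q | ∃ (t : ℕ) (g : Fin t → MvPolynomial σ ℝ), (∀ i, (g i).support ⊆ B) ∧ q = ∑ i, g i ^ 2}

variable {B}

theorem gramPoly_mem_sumSq {G : Matrix B B ℝ} (hG : G.PosSemidef) : gramPoly B G ∈ sumSq B := by
  obtain ⟨a, rfl⟩ := hG.exists_eq_sum_vecMulVec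
  refine ⟨Fintype.card B, fun i => ofCoeffs B (a ((Fintype.equivFin B).symm i)),
    fun i => support_ofCoeffs_subset B _, ?_⟩
  simp only [map_sum, gramPoly_vecMulVec]
  exact (Equiv.sum_comp (Fintype.equivFin B).symm _).symm

theorem exists_gramPoly_eq_of_mem_sumSq {q : MvPolynomial σ ℝ} (hq : q ∈ sumSq B) :
    ∃ G : Matrix B B ℝ, G.PosSemidef ∧ gramPoly B G = q := by
  obtain ⟨t, g, hg, rfl⟩ := hq
  refine ⟨∑ i, vecMulVec (fun b => (g i).coeff b) (fun b => (g i).coeff b),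
    posSemidef_sum _ fun i _ => posSemidef_vecMulVec_self_star _, ?_⟩
  simp only [map_sum, gramPoly_vecMulVec, ofCoeffs_coeff (hg _)]

theorem mem_sumSq_iff_exists_gramPoly_eq {q : MvPolynomial σ ℝ} :
    q ∈ sumSq B ↔ ∃ G : Matrix B B ℝ, G.PosSemidef ∧ gramPoly B G = q :=
  ⟨exists_gramPoly_eq_of_mem_sumSq, fun ⟨_, hG, hq⟩ => hq ▸ gramPoly_mem_sumSq hG⟩

theorem eq_zero_of_sum_sq_eq_zero {ι : Type*} {s : Finset ι} {g : ι → MvPolynomial σ ℝ}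
    (h : ∑ i ∈ s, g i ^ 2 = 0) {i : ι} (hi : i ∈ s) : g i = 0 :=
  funext fun x => by
    have hx := congrArg (eval x) h
    simp only [map_sum, map_pow, map_zero] at hx
    simpa using (sum_eq_zero_iff_of_nonneg fun j _ => sq_nonneg (eval x (g j))).1 hx i hi

theorem eq_zero_of_gramPoly_eq_zero {G : Matrix B B ℝ} (hG : G.PosSemidef)
    (h : gramPoly B G = 0) : G = 0 := by
  obtain ⟨a, rfl⟩ := hG.exists_eq_sum_vecMulVec
  simp only [map_sum, gramPoly_vecMulVec] at h
  have ha : ∀ j, a j = 0 := fun j => _root_.funext fun b => by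
    rw [← coeff_ofCoeffs B (a j) b, eq_zero_of_sum_sq_eq_zero h (mem_univ j), coeff_zero]; rfl
  simp [ha]

end Gram

section Moment

variable (B : Finset (σ →₀ ℕ))

noncomputable def momentMatrix : ((σ →₀ ℕ) → ℝ) →ₗ[ℝ] Matrix B B ℝ where
  toFun v := Matrix.of fun b b' => v (b.1 + b'.1)
  map_add' _ _ := rfl
  map_smul' _ _ := rfl

@[simp] theorem momentMatrix_apply (v : (σ →₀ ℕ) → ℝ) (b b' : B) :
    momentMatrix B v b b' = v (b.1 + b'.1) := rfl

noncomputable def momentCone : PointedCone ℝ ((σ →₀ ℕ) → ℝ) :=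
  (posSemidefCone B : PointedCone ℝ (Matrix B B ℝ)).comap (momentMatrix B)

variable {B}

theorem rieszPairing_ofCoeffs_sq (c : B → ℝ) (v : (σ →₀ ℕ) → ℝ) :
    rieszPairing (ofCoeffs B c ^ 2) v = c ⬝ᵥ momentMatrix B v *ᵥ c := by
  rw [← gramPoly_vecMulVec, rieszPairing_gramPoly]
  simp only [dotProduct, mulVec, momentMatrix_apply, vecMulVec_apply, mul_sum]
  exact sum_congr rfl fun _ _ => sum_congr rfl fun _ _ => by ring

theorem mem_momentCone_iff {v : (σ →₀ ℕ) → ℝ} :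
    v ∈ momentCone B ↔ ∀ c : B → ℝ, 0 ≤ rieszPairing (ofCoeffs B c ^ 2) v := by
  simp only [rieszPairing_ofCoeffs_sq]
  refine ⟨fun hv c => hv.dotProduct_mulVec_nonneg c, fun h => .of_dotProduct_mulVec_nonneg ?_ h⟩
  ext b b'
  simp [add_comm]

theorem sumSq_subset_dual_momentCone :
    sumSq B ⊆ PointedCone.dual rieszPairing.flip (momentCone B : Set ((σ →₀ ℕ) → ℝ)) := by
  rintro _ ⟨t, g, hg, rfl⟩ v hv
  rw [LinearMap.flip_apply, map_sum, LinearMap.sum_apply]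
  exact sum_nonneg fun i _ => ofCoeffs_coeff (hg i) ▸ mem_momentCone_iff.1 hv _

end Moment

section CoeffSpace

noncomputable def coeffVec (s : Finset (σ →₀ ℕ)) : MvPolynomial σ ℝ →ₗ[ℝ] (s → ℝ) :=
  LinearMap.pi fun γ => lcoeff ℝ γ.1

theorem coeffVec_injOn (s : Finset (σ →₀ ℕ)) :
    Set.InjOn (coeffVec s) {q | q.support ⊆ s} := fun p hp q hq h => by
  ext γ
  by_cases hγ : γ ∈ s
  · exact congrFun h ⟨γ, hγ⟩
  · rw [notMem_support_iff.1 fun h => hγ (hp h), notMem_support_iff.1 fun h => hγ (hq h)]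

noncomputable def momentsOf {s : Finset (σ →₀ ℕ)} (φ : (s → ℝ) →ₗ[ℝ] ℝ) : (σ →₀ ℕ) → ℝ :=
  open Classical in fun γ => if h : γ ∈ s then φ (Pi.single ⟨γ, h⟩ 1) else 0

theorem rieszPairing_momentsOf {s : Finset (σ →₀ ℕ)} {q : MvPolynomial σ ℝ} (hq : q.support ⊆ s)
    (φ : (s → ℝ) →ₗ[ℝ] ℝ) : rieszPairing q (momentsOf φ) = φ (coeffVec s q) := by
  classical
  rw [rieszPairing_apply_of_support_subset hq, φ.pi_apply_eq_sum_univ, ← sum_coe_sort s]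
  refine sum_congr rfl fun γ _ => ?_
  have : (fun j => if γ = j then (1 : ℝ) else 0) = Pi.single γ 1 := by
    ext j
    simp [Pi.single_apply, eq_comm]
  simp [momentsOf, coeffVec, this]

variable [DecidableEq σ] (B : Finset (σ →₀ ℕ))

/-- The cone `Σ_B`, seen in the coefficient space `ℝ^(B+B)`. -/
noncomputable def sosCone : ProperCone ℝ (B + B → ℝ) where
  toSubmodule := (posSemidefCone B : PointedCone ℝ (Matrix B B ℝ)).map
    (coeffVec (B + B) ∘ₗ gramPoly B)
  isClosed' := by
    let : NormedAddCommGroup (Matrix B B ℝ) := Matrix.normedAddCommGroup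
    let : NormedSpace ℝ (Matrix B B ℝ) := Matrix.normedSpace
    exact (posSemidefCone B).isClosed_image_of_eq_zero
      (LinearMap.toContinuousLinearMap (coeffVec (B + B) ∘ₗ gramPoly B)) fun G hG h => eq_zero_of_gramPoly_eq_zero hG <| coeffVec_injOn _
        (support_gramPoly_subset B G) (by simp) (h.trans (map_zero _).symm)

variable {B}

theorem coeffVec_mem_sosCone_iff {q : MvPolynomial σ ℝ} (hq : q.support ⊆ B + B) :
    coeffVec (B + B) q ∈ sosCone B ↔ q ∈ sumSq B := by
  rw [mem_sumSq_iff_exists_gramPoly_eq]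
  refine exists_congr fun G => and_congr_right fun _ => ⟨fun h => ?_, fun h => h ▸ rfl⟩
  exact coeffVec_injOn _ (support_gramPoly_subset B G) hq h

theorem mem_sumSq_of_mem_dual_momentCone {q : MvPolynomial σ ℝ} (hq : q.support ⊆ B + B)
    (h : q ∈ PointedCone.dual rieszPairing.flip (momentCone B : Set ((σ →₀ ℕ) → ℝ))) :
    q ∈ sumSq B := by
  rw [← coeffVec_mem_sosCone_iff hq]
  by_contra hq'
  obtain ⟨φ, hφ, hφq⟩ := (sosCone B).hyperplane_separation_point hq'
  have hv : momentsOf (φ : (B + B → ℝ) →ₗ[ℝ] ℝ) ∈ momentCone B := mem_momentCone_iff.2 fun c => by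
    rw [← gramPoly_vecMulVec, rieszPairing_momentsOf (support_gramPoly_subset B _)]
    exact hφ _ ⟨_, posSemidef_vecMulVec_self_star c, rfl⟩
  have := h hv
  rw [LinearMap.flip_apply, rieszPairing_momentsOf hq] at this
  exact hφq.not_ge this

theorem mem_dual_momentCone_iff {q : MvPolynomial σ ℝ} (hq : q.support ⊆ B + B) :
    q ∈ PointedCone.dual rieszPairing.flip (momentCone B : Set ((σ →₀ ℕ) → ℝ)) ↔ q ∈ sumSq B :=
  ⟨mem_sumSq_of_mem_dual_momentCone hq, fun h => sumSq_subset_dual_momentCone h⟩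

end CoeffSpace

end MvPolynomial

open MvPolynomial in
/-- SOS / moment duality: for finite `B ⊆ ℕⁿ` with `0 ∈ B` and `f ∈ ℝ[x]_{B+B}`,
`sup {λ : f − λ ∈ Σ_B} = inf {L_v(f) : v₀ = 1, L_v(M_B) ⪰ 0}`, where `L_v(M_B)` is the
moment matrix `(v_{β+β'})_{β,β'∈B}`. -/
theorem sos_moment_duality (n : ℕ) (B : Finset (Fin n →₀ ℕ))
    (h0 : (0 : Fin n →₀ ℕ) ∈ B) (f : MvPolynomial (Fin n) ℝ)
    (hf : f.support ⊆
      Finset.image (fun p : (Fin n →₀ ℕ) × (Fin n →₀ ℕ) => p.1 + p.2) (B ×ˢ B)) :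
    sSup {lam : ℝ | ∃ (t : ℕ) (g : Fin t → MvPolynomial (Fin n) ℝ),
        (∀ i, (g i).support ⊆ B) ∧ f - MvPolynomial.C lam = ∑ i, (g i) ^ 2}
      = sInf {r : ℝ | ∃ v : (Fin n →₀ ℕ) → ℝ, v 0 = 1 ∧
          (Matrix.of fun b b' : ↥B => v (b.1 + b'.1)).PosSemidef ∧
          r = ∑ γ ∈ f.support, f.coeff γ * v γ} := by
  have hsupp (lam : ℝ) : (f - C lam).support ⊆ B + B :=
    support_sub _ _ _ |>.trans <| union_subset hf <| support_monomial_subset.trans <|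
      singleton_subset_iff.2 (by simpa using Finset.add_mem_add h0 h0)
  have hone : (1 : MvPolynomial (Fin n) ℝ) ∈ PointedCone.dual rieszPairing.flip
      (momentCone B : Set ((Fin n →₀ ℕ) → ℝ)) :=
    sumSq_subset_dual_momentCone ⟨1, fun _ => 1, fun _ => by simp [h0], by simp⟩
  have hδ : Pi.single 0 1 ∈ momentCone B := mem_momentCone_iff.2 fun c => by
    rw [rieszPairing_single_zero, ← constantCoeff_eq, map_pow]
    positivity
  convert PointedCone.sSup_eq_sInf_of_mem_dual rieszPairing (momentCone B) hone
    ⟨_, hδ, by simp [rieszPairing_one]⟩ f using 2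
  · ext lam
    rw [Set.mem_ofPred_eq, Set.mem_ofPred_eq, ← C_eq_smul_one,
      mem_dual_momentCone_iff (hsupp lam)]
    rfl
  · ext r
    simp only [Set.mem_ofPred_eq, rieszPairing_one]
    exact exists_congr fun v => ⟨fun ⟨h1, h2, h3⟩ => ⟨h2, h1, h3⟩, fun ⟨h1, h2, h3⟩ => ⟨h2, h1, h3⟩⟩
end
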